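/- arXiv:1712.05715 — 3 statements merged into one kernel-verified Lean document; each statement's English description precedes it below -/
import Mathlib

section
/- Let V⁺ = [[0,0,0,0],[0,0,0,0],[−1,1,0,0],[0,−1,0,0]] and V⁻ = [[0,1,0,1],[−1,0,0,0],[−1,1,0,1],[−1,−1,−1,0]] be the 4×4 integer Seifert matrices of the almost classical knot 5.2025. Then det(t·V⁺ − (V⁺)ᵀ) = t² and det(t·V⁻ − (V⁻)ᵀ) = t² in the polynomial ring ℤ[t]; equivalently, both directed Alexander–Conway polynomials of 5.2025 (for this Seifert surface) satisfy ∇⁺(t) = 1 and ∇⁻(t) = 1. -/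
open Polynomial Matrix

/-- The Seifert matrices of the almost classical knot 5.2025, regarded as matrices
over `ℤ[X]` via the canonical inclusion `ℤ → ℤ[X]`. -/
noncomputable def V52025plus : Matrix (Fin 4) (Fin 4) (Polynomial ℤ) :=
  !![0, 0, 0, 0; 0, 0, 0, 0; -1, 1, 0, 0; 0, -1, 0, 0]

noncomputable def V52025minus : Matrix (Fin 4) (Fin 4) (Polynomial ℤ) :=
  !![0, 1, 0, 1; -1, 0, 0, 0; -1, 1, 0, 1; -1, -1, -1, 0]

theorem Matrix.det_fin_four {R : Type*} [CommRing R] (A : Matrix (Fin 4) (Fin 4) R) :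
    A.det =
      A 0 0 * (A 1 1 * (A 2 2 * A 3 3 - A 2 3 * A 3 2) -
        A 1 2 * (A 2 1 * A 3 3 - A 2 3 * A 3 1) + A 1 3 * (A 2 1 * A 3 2 - A 2 2 * A 3 1)) -
      A 0 1 * (A 1 0 * (A 2 2 * A 3 3 - A 2 3 * A 3 2) -
        A 1 2 * (A 2 0 * A 3 3 - A 2 3 * A 3 0) + A 1 3 * (A 2 0 * A 3 2 - A 2 2 * A 3 0)) +
      A 0 2 * (A 1 0 * (A 2 1 * A 3 3 - A 2 3 * A 3 1) -
        A 1 1 * (A 2 0 * A 3 3 - A 2 3 * A 3 0) + A 1 3 * (A 2 0 * A 3 1 - A 2 1 * A 3 0)) -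
      A 0 3 * (A 1 0 * (A 2 1 * A 3 2 - A 2 2 * A 3 1) -
        A 1 1 * (A 2 0 * A 3 2 - A 2 2 * A 3 0) + A 1 2 * (A 2 0 * A 3 1 - A 2 1 * A 3 0)) := by
  rw [det_succ_row_zero]
  simp only [Fin.sum_univ_four, det_fin_three]
  simp [Fin.succAbove, Fin.lt_def]
  ring

lemma X_smul_V52025plus_sub_transpose :
    (X : ℤ[X]) • V52025plus - V52025plusᵀ =
      !![0, 0, 1, 0; 0, 0, -1, 1; -X, X, 0, 0; 0, -X, 0, 0] := by
  ext i j : 2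
  fin_cases i <;> fin_cases j <;> simp [V52025plus]

lemma X_smul_V52025minus_sub_transpose :
    (X : ℤ[X]) • V52025minus - V52025minusᵀ =
      !![0, X + 1, 1, X + 1; -(X + 1), 0, -1, 1; -X, X, 0, X + 1; -(X + 1), -X, -(X + 1), 0] := by
  ext i j : 2
  fin_cases i <;> fin_cases j <;> simp [V52025minus] <;> ring

/-- det(t·V⁺ − (V⁺)ᵀ) = t² and det(t·V⁻ − (V⁻)ᵀ) = t² in ℤ[t], i.e. both directed
Alexander–Conway polynomials of 5.2025 (for this Seifert surface) equal 1. -/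
theorem directed_alexander_conway_5pt2025 :
    ((Polynomial.X : Polynomial ℤ) • V52025plus - V52025plusᵀ).det = Polynomial.X ^ 2 ∧
    ((Polynomial.X : Polynomial ℤ) • V52025minus - V52025minusᵀ).det = Polynomial.X ^ 2 := by
  rw [X_smul_V52025plus_sub_transpose, X_smul_V52025minus_sub_transpose, det_fin_four,
    det_fin_four]
  simp only [of_apply, cons_val', cons_val, empty_val', cons_val_fin_one]
  constructor <;> ring
end

section
/- There is no polynomial f ∈ ℤ[t] such that 3 − t − t⁻¹ = f(t)·f(t⁻¹) in the Laurent polynomial ring ℤ[t,t⁻¹]. (This is the algebraic fact from which the paper concludes that the almost classical knot 6.87548, whose directed Alexander–Conway polynomial is ∇⁻(t) = 3 − t − t⁻¹, is not slice.) -/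
/-! Evaluating at `t = -1` turns `3 - t - t⁻¹ = f(t) f(t⁻¹)` into `5 = f(-1)²`, and `5` is not a
square in `ℤ`. -/

open Polynomial LaurentPolynomial

theorem LaurentPolynomial.eval₂_toLaurent_mul_aeval_T_neg_one {R : Type*} [CommRing R]
    (f : R[X]) (u : Rˣ) :
    eval₂ (RingHom.id R) u (toLaurent f * aeval (T (-1) : R[T;T⁻¹]) f) =
      f.eval (u : R) * f.eval ↑u⁻¹ := by
  have hC : (eval₂ (RingHom.id R) u).comp (algebraMap R R[T;T⁻¹]) = RingHom.id R :=
    RingHom.ext fun r => by simp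
  rw [map_mul, eval₂_toLaurent, aeval_def, hom_eval₂, eval₂_T, zpow_neg_one, hC]
  rfl

/-- There is no polynomial f ∈ ℤ[t] such that 3 − t − t⁻¹ = f(t)·f(t⁻¹) in the
Laurent polynomial ring ℤ[t,t⁻¹].  Here f(t) is the image of f under the canonical
inclusion ℤ[t] → ℤ[t,t⁻¹] and f(t⁻¹) is the image of f under the ring homomorphism
ℤ[t] → ℤ[t,t⁻¹] sending t to t⁻¹.  This is the algebraic fact from which the paper
concludes that the almost classical knot 6.87548 is not slice. -/
theorem no_fischer_factorization_6pt87548 :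
    ¬ ∃ f : Polynomial ℤ,
      (3 : LaurentPolynomial ℤ) - LaurentPolynomial.T 1 - LaurentPolynomial.T (-1) =
        (Polynomial.toLaurent f) *
          (Polynomial.aeval (LaurentPolynomial.T (-1) : LaurentPolynomial ℤ) f) := by
  rintro ⟨f, hf⟩
  have h := congrArg (LaurentPolynomial.eval₂ (RingHom.id ℤ) (-1)) hf
  rw [eval₂_toLaurent_mul_aeval_T_neg_one, inv_neg_one] at h
  have h5 : (5 : ℤ) = f.eval (-1) * f.eval (-1) := by simpa [map_ofNat] using h
  exact (by norm_num : ¬ IsSquare (5 : ℤ)) ⟨_, h5⟩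
end

section
/- Let V⁺ = [[1,0],[0,−1]] and V⁻ = [[1,1],[−1,−1]] be the 2×2 integer Seifert matrices of the almost classical knot 4.99, regarded as complex matrices. For every complex number ω with |ω| = 1 and ω ≠ 1, and for V equal to either V⁺ or V⁻, the 2×2 complex matrix W = (1−ω)·V + (1−ω̄)·Vᵀ is Hermitian, has trace 0, and its determinant is a real number strictly less than 0; consequently W has one strictly positive and one strictly negative eigenvalue, so the directed signatures σ̂±_ω(𝒦,F) = sig((1−ω)V^± + (1−ω̄)(V^±)ᵀ) of 4.99 vanish for all ω ∈ S¹ \ {1}. -/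
open Matrix Complex

/-- The Seifert matrices of the almost classical knot 4.99, regarded as complex
matrices. -/
noncomputable def V499plusC : Matrix (Fin 2) (Fin 2) ℂ := !![1, 0; 0, -1]

noncomputable def V499minusC : Matrix (Fin 2) (Fin 2) ℂ := !![1, 1; -1, -1]

/-!
For a real Seifert matrix V, W = z V + z̄ Vᵀ (with z = 1 − ω) is Hermitian with trace
(z + z̄) tr V. Both Seifert matrices of 4.99 are traceless, so W is a traceless Hermitian
2 × 2 matrix, and its determinant −(W₀₀² + |W₀₁|²) is negative as soon as
W₀₀ = 2 (1 − Re ω) ≠ 0, which holds on the unit circle away from 1. The two real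
eigenvalues then have negative product, hence opposite signs.
-/

open ComplexConjugate

namespace Matrix

variable {n R : Type*}

theorem isHermitian_smul_add_star_smul_transpose [CommRing R] [StarRing R]
    {V : Matrix n n R} (hV : V.map star = V) (z : R) :
    (z • V + star z • Vᵀ).IsHermitian := by
  rw [IsHermitian, conjTranspose_add, conjTranspose_smul, conjTranspose_smul, star_star,
    transpose_conjTranspose, hV, ← transpose_transpose Vᴴ, conjTranspose_transpose, hV,
    add_comm]

theorem trace_smul_add_smul_transpose [Fintype n] [CommSemiring R] (V : Matrix n n R)
    (z w : R) : (z • V + w • Vᵀ).trace = (z + w) * V.trace := by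
  rw [trace_add, trace_smul, trace_smul, trace_transpose, smul_eq_mul, smul_eq_mul, add_mul]

theorem IsHermitian.det_fin_two_of_trace_eq_zero {W : Matrix (Fin 2) (Fin 2) ℂ}
    (hW : W.IsHermitian) (htr : W.trace = 0) :
    W.det = -(((W 0 0).re ^ 2 + normSq (W 0 1) : ℝ) : ℂ) := by
  have h10 : W 1 0 = conj (W 0 1) := (hW.apply 1 0).symm
  have h00 : (W 0 0).im = 0 := conj_eq_iff_im.mp (hW.apply 0 0)
  have h11 : W 1 1 = -W 0 0 := by
    rw [trace_fin_two] at htr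
    linear_combination htr
  rw [det_fin_two, h10, h11]
  apply Complex.ext <;> simp [normSq_apply, h00, sq] <;> ring

theorem IsHermitian.exists_eigenvalues_pos_neg_of_det_re_neg {W : Matrix (Fin 2) (Fin 2) ℂ}
    (hW : W.IsHermitian) (hdet : W.det.re < 0) :
    ∃ i j : Fin 2, 0 < hW.eigenvalues i ∧ hW.eigenvalues j < 0 := by
  rw [hW.det_eq_prod_eigenvalues, Fin.prod_univ_two] at hdet
  norm_cast at hdet
  rcases mul_neg_iff.mp hdet with h | h
  exacts [⟨0, 1, h⟩, ⟨1, 0, h.2, h.1⟩]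

end Matrix

theorem Complex.re_lt_one_of_norm_eq_one {ω : ℂ} (hω : ‖ω‖ = 1) (hω1 : ω ≠ 1) :
    ω.re < 1 := by
  have h := normSq_pos.mpr (sub_ne_zero.mpr hω1.symm)
  rw [normSq_sub, normSq_one, normSq_eq_norm_sq ω, hω] at h
  simp only [one_mul, conj_re] at h
  linarith

/-- For every unit complex number ω ≠ 1 and V ∈ {V⁺, V⁻} of the knot 4.99, the
matrix W = (1−ω)·V + (1−ω̄)·Vᵀ is Hermitian, has trace 0, and has determinant a
real number strictly less than 0; consequently W has one strictly positive and one
strictly negative eigenvalue, so the directed signatures σ̂±_ω(𝒦,F) of 4.99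
vanish for all ω ∈ S¹ \ {1}. -/
theorem directed_signatures_4pt99_vanish
    (ω : ℂ) (hω : ‖ω‖ = 1) (hω1 : ω ≠ 1)
    (V : Matrix (Fin 2) (Fin 2) ℂ) (hV : V = V499plusC ∨ V = V499minusC) :
    ∃ hW : ((1 - ω) • V + (1 - starRingEnd ℂ ω) • Vᵀ).IsHermitian,
      ((1 - ω) • V + (1 - starRingEnd ℂ ω) • Vᵀ).trace = 0 ∧
      ((1 - ω) • V + (1 - starRingEnd ℂ ω) • Vᵀ).det.im = 0 ∧
      ((1 - ω) • V + (1 - starRingEnd ℂ ω) • Vᵀ).det.re < 0 ∧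
      ∃ i j : Fin 2, 0 < hW.eigenvalues i ∧ hW.eigenvalues j < 0 := by
  obtain ⟨hreal, htrV, hV00⟩ : V.map star = V ∧ V.trace = 0 ∧ V 0 0 = 1 := by
    rcases hV with rfl | rfl <;>
      simp [V499plusC, V499minusC, trace_fin_two, ← Matrix.ext_iff, Fin.forall_fin_two]
  set W := (1 - ω) • V + (1 - conj ω) • Vᵀ
  have hW : W.IsHermitian := by
    simpa using isHermitian_smul_add_star_smul_transpose hreal (1 - ω)
  have htr : W.trace = 0 := by rw [trace_smul_add_smul_transpose, htrV, mul_zero]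
  have hW00 : (W 0 0).re = 2 * (1 - ω.re) := by
    simp only [W, Matrix.add_apply, Matrix.smul_apply, transpose_apply, hV00, smul_eq_mul,
      mul_one, add_re, sub_re, one_re, conj_re]
    ring
  have hdet := hW.det_fin_two_of_trace_eq_zero htr
  have hdet_re : W.det.re < 0 := by
    have hre := Complex.re_lt_one_of_norm_eq_one hω hω1
    rw [hdet, neg_re, ofReal_re, hW00, neg_neg_iff_pos]
    nlinarith [normSq_nonneg (W 0 1)]
  exact ⟨hW, htr, by rw [hdet, neg_im, ofReal_im, neg_zero], hdet_re,
    hW.exists_eigenvalues_pos_neg_of_det_re_neg hdet_re⟩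
end
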